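/- arXiv:2406.18150 — 5 statements merged into one kernel-verified Lean document; each statement's English description precedes it below -/
import Mathlib

section
/- For every real t > 0, the integrand s ↦ (t/(2π))^{i(s−iσ)/2} · ζ(1/2 + σ + i(t+s)) · π/(2 sinh(π(s−iσ)/2)) is integrable over ℝ for each σ ∈ (1/2, 2), and the value G_σ(t) is the same for all σ ∈ (1/2, 2). -/
open Complex MeasureTheory Real Set

noncomputable section

/-- The integrand in the definition of `G_σ(t)`:
`(t/(2π))^{i(s−iσ)/2} · ζ(1/2 + σ + i(t+s)) · π/(2 sinh(π(s−iσ)/2))`,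
where `(t/(2π))^w := exp(w·log(t/(2π)))`. -/
def Gker (σ t : ℝ) (s : ℝ) : ℂ :=
  Complex.exp (Complex.I * ((s : ℂ) - Complex.I * σ) / 2 * Real.log (t / (2 * π))) *
    riemannZeta (1/2 + σ + Complex.I * ((t : ℂ) + s)) *
    ((π : ℂ) / (2 * Complex.sinh ((π : ℂ) * ((s : ℂ) - Complex.I * σ) / 2)))

/-- `G_σ(t) := (1/(2πi)) ∫_ℝ (t/(2π))^{i(s−iσ)/2} ζ(1/2+σ+i(t+s)) π/(2 sinh(π(s−iσ)/2)) ds`. -/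
def G (σ : ℝ) (t : ℝ) : ℂ :=
  (2 * (π : ℂ) * Complex.I)⁻¹ * ∫ s : ℝ, Gker σ t s

/-! The integrand is the trace on the line `Im z = -σ` of `GkerComplex t z`, which is
holomorphic on the strip `-2 < Im z < -1/2` (the pole of `ζ` lies on `Im z = -1/2`, and
`sinh (π z / 2)` vanishes at `z = -2i`). On closed substrips `ζ` is bounded by its Dirichlet
series and `‖sinh (x + iy)‖² = sinh² x + sin² y`, so the integrand decays like
`1 / cosh (π Re z / 2)`: it is integrable along horizontal lines and its integrals over vertical
segments vanish as `|Re z| → ∞`. Cauchy's theorem on rectangles then makes the line integral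
independent of `σ`. -/

open Filter Topology
open scoped Interval

namespace Complex

lemma norm_sinh_sq (z : ℂ) : ‖sinh z‖ ^ 2 = Real.sinh z.re ^ 2 + Real.sin z.im ^ 2 := by
  have h : sinh z = ((Real.sinh z.re * Real.cos z.im : ℝ) : ℂ) +
      ((Real.cosh z.re * Real.sin z.im : ℝ) : ℂ) * I := by
    conv_lhs => rw [← re_add_im z]
    rw [sinh_add, sinh_mul_I, cosh_mul_I]
    push_cast
    ring
  rw [h, Complex.sq_norm, normSq_add_mul_I]
  linear_combination Real.sinh z.re ^ 2 * Real.sin_sq_add_cos_sq z.im +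
    Real.sin z.im ^ 2 * Real.cosh_sq z.re

lemma abs_sinh_re_le_norm_sinh (z : ℂ) : |Real.sinh z.re| ≤ ‖sinh z‖ := by
  simpa using sq_le_sq.mp (by nlinarith [norm_sinh_sq z] : Real.sinh z.re ^ 2 ≤ ‖sinh z‖ ^ 2)

lemma abs_sin_im_mul_cosh_re_le_norm_sinh (z : ℂ) :
    |Real.sin z.im| * Real.cosh z.re ≤ ‖sinh z‖ := by
  refine le_of_sq_le_sq ?_ (norm_nonneg _)
  rw [mul_pow, sq_abs, Real.cosh_sq, norm_sinh_sq]
  nlinarith [Real.sin_sq_le_one z.im, sq_nonneg (Real.sinh z.re)]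

end Complex

lemma Real.one_add_sq_div_two_le_cosh (x : ℝ) : 1 + x ^ 2 / 2 ≤ Real.cosh x := by
  have h := sum_le_hasSum (Finset.range 2) (fun n _ => by rw [pow_mul]; positivity)
    (Real.hasSum_cosh x)
  simpa [Finset.sum_range_succ] using h

lemma Real.abs_le_abs_sinh (x : ℝ) : |x| ≤ |Real.sinh x| := by
  rw [Real.abs_sinh]
  exact Real.self_le_sinh_iff.mpr (abs_nonneg x)

lemma norm_riemannZeta_le_of_le_re {a : ℝ} (ha : 1 < a) {w : ℂ} (hw : a ≤ w.re) :
    ‖riemannZeta w‖ ≤ ∑' n : ℕ, 1 / (n : ℝ) ^ a := by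
  rw [zeta_eq_tsum_one_div_nat_cpow (ha.trans_le hw)]
  refine tsum_of_norm_bounded (Real.summable_one_div_nat_rpow.mpr ha).hasSum fun n => ?_
  rcases n.eq_zero_or_pos with rfl | hn
  · simp [Complex.zero_cpow (ne_zero_of_one_lt_re (ha.trans_le hw)), (zero_lt_one.trans ha).ne']
  · rw [norm_div, norm_one, Complex.norm_natCast_cpow_of_pos hn]
    gcongr
    exact_mod_cast hn

lemma tendsto_intervalIntegral_zero_of_norm_le {ι E : Type*} [NormedAddCommGroup E]
    [NormedSpace ℝ E] {l : Filter ι} {f : ι → ℝ → E} {g : ι → ℝ} {a b : ℝ}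
    (hg : Tendsto g l (𝓝 0)) (hfg : ∀ᶠ x in l, ∀ y ∈ Ι a b, ‖f x y‖ ≤ g x) :
    Tendsto (fun x => ∫ y in a..b, f x y) l (𝓝 0) :=
  squeeze_zero_norm'
    (hfg.mono fun _ hx => intervalIntegral.norm_integral_le_of_norm_le_const hx)
    (by simpa using hg.mul_const |b - a|)

theorem integral_add_mul_I_eq_of_differentiableOn {E : Type*} [NormedAddCommGroup E]
    [NormedSpace ℂ E] [CompleteSpace E] {f : ℂ → E} {a b : ℝ}
    (hf : DifferentiableOn ℂ f (univ ×ℂ [[a, b]]))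
    (ha : Integrable fun x : ℝ => f (x + a * I)) (hb : Integrable fun x : ℝ => f (x + b * I))
    (hvert : Tendsto (fun x : ℝ => ∫ y in a..b, f (x + y * I)) (cocompact ℝ) (𝓝 0)) :
    ∫ x : ℝ, f (x + a * I) = ∫ x : ℝ, f (x + b * I) := by
  have hrect : ∀ R : ℝ, (∫ x in -R..R, f (x + a * I)) - (∫ x in -R..R, f (x + b * I)) =
      I • (∫ y in a..b, f ((-R : ℝ) + y * I)) - I • (∫ y in a..b, f (R + y * I)) := by
    intro R
    have h : (∫ x in -R..R, f (x + a * I)) - (∫ x in -R..R, f (x + b * I)) +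
        I • (∫ y in a..b, f (R + y * I)) - I • (∫ y in a..b, f ((-R : ℝ) + y * I)) = 0 :=
      integral_boundary_rect_eq_zero_of_differentiableOn f ⟨-R, a⟩ ⟨R, b⟩
        (hf.mono fun z hz => ⟨trivial, hz.2⟩)
    rw [← sub_eq_zero, ← h]
    abel
  have hhor : Tendsto
      (fun R : ℝ => (∫ x in -R..R, f (x + a * I)) - ∫ x in -R..R, f (x + b * I)) atTop
      (𝓝 ((∫ x : ℝ, f (x + a * I)) - ∫ x : ℝ, f (x + b * I))) :=
    (intervalIntegral_tendsto_integral ha tendsto_neg_atTop_atBot tendsto_id).sub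
      (intervalIntegral_tendsto_integral hb tendsto_neg_atTop_atBot tendsto_id)
  have hver : Tendsto (fun R : ℝ => I • (∫ y in a..b, f ((-R : ℝ) + y * I)) -
      I • (∫ y in a..b, f (R + y * I))) atTop (𝓝 0) := by
    have hbot := (hvert.mono_left atBot_le_cocompact).comp tendsto_neg_atTop_atBot
    have htop := hvert.mono_left atTop_le_cocompact
    simpa using (hbot.const_smul I).sub (htop.const_smul I)
  exact sub_eq_zero.mp (tendsto_nhds_unique (hhor.congr hrect) hver)

def GkerComplex (t : ℝ) (z : ℂ) : ℂ :=
  Complex.exp (I * z / 2 * Real.log (t / (2 * π))) * riemannZeta (1/2 + I * t + I * z) *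
    (π / (2 * Complex.sinh (π * z / 2)))

lemma Gker_eq_GkerComplex (σ t : ℝ) :
    Gker σ t = fun x : ℝ => GkerComplex t (x + (-σ : ℝ) * I) := by
  funext x
  have hz : (x + (-σ : ℝ) * I : ℂ) = x - I * σ := by push_cast; ring
  have hζ : (1/2 + σ + I * (t + x) : ℂ) = 1/2 + I * t + I * (x - I * σ) := by
    linear_combination (σ : ℂ) * I_sq
  rw [hz, Gker, GkerComplex, hζ]

lemma sinh_pi_mul_div_two_ne_zero {z : ℂ} (hz : z.im ∈ Ioo (-2) 0) :
    Complex.sinh (π * z / 2) ≠ 0 := by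
  have hsin : Real.sin (π * z.im / 2) < 0 :=
    Real.sin_neg_of_neg_of_neg_pi_lt (by nlinarith [pi_pos, hz.2]) (by nlinarith [pi_pos, hz.1])
  refine norm_pos_iff.mp (lt_of_lt_of_le ?_ (abs_sin_im_mul_cosh_re_le_norm_sinh _))
  have him : (π * z / 2 : ℂ).im = π * z.im / 2 := by simp
  rw [him]
  exact mul_pos (abs_pos.mpr hsin.ne) (Real.cosh_pos _)

lemma differentiableOn_GkerComplex (t : ℝ) :
    DifferentiableOn ℂ (GkerComplex t) (univ ×ℂ Ioo (-2) (-1/2)) := by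
  rintro z ⟨-, hz⟩
  have hζ : 1/2 + I * t + I * z ≠ 1 := fun h => by
    have := congrArg re h
    simp at this
    linarith [hz.2]
  have hsinh := sinh_pi_mul_div_two_ne_zero (z := z) ⟨hz.1, by linarith [hz.2]⟩
  refine DifferentiableAt.differentiableWithinAt ?_
  unfold GkerComplex
  refine ((DifferentiableAt.cexp (by fun_prop)).mul
    ((differentiableAt_riemannZeta hζ).comp z (by fun_prop))).mul
    ((differentiableAt_const _).div (by fun_prop) (mul_ne_zero two_ne_zero hsinh))

lemma exists_norm_GkerComplex_le (t : ℝ) {a : ℝ} (ha : 1/2 < a) :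
    ∃ C, 0 ≤ C ∧ ∀ z : ℂ, z.im ∈ Icc (-2) (-a) →
      ‖GkerComplex t z‖ ≤ C / ‖Complex.sinh (π * z / 2)‖ := by
  set L := Real.log (t / (2 * π))
  set Z := ∑' n : ℕ, 1 / (n : ℝ) ^ (1/2 + a)
  refine ⟨rexp |L| * Z * (π / 2), by positivity, fun z ⟨hz₁, hz₂⟩ => ?_⟩
  have hexp : ‖Complex.exp (I * z / 2 * L)‖ ≤ rexp |L| := by
    rw [Complex.norm_exp, Real.exp_le_exp,
      show (I * z / 2 * L).re = -z.im * L / 2 by simp; ring]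
    nlinarith [mul_nonneg (by linarith : 0 ≤ -z.im) (sub_nonneg.mpr (le_abs_self L)),
      mul_nonneg (by linarith : 0 ≤ 2 + z.im) (abs_nonneg L)]
  have hζ : ‖riemannZeta (1/2 + I * t + I * z)‖ ≤ Z :=
    norm_riemannZeta_le_of_le_re (by linarith) (by simp; linarith)
  calc ‖GkerComplex t z‖
      = ‖Complex.exp (I * z / 2 * L)‖ * ‖riemannZeta (1/2 + I * t + I * z)‖ *
          (π / (2 * ‖Complex.sinh (π * z / 2)‖)) := by
        simp [GkerComplex, L, abs_of_pos pi_pos]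
    _ ≤ rexp |L| * Z * (π / (2 * ‖Complex.sinh (π * z / 2)‖)) := by gcongr
    _ = rexp |L| * Z * (π / 2) / ‖Complex.sinh (π * z / 2)‖ := by ring

lemma integrable_Gker (t : ℝ) {σ : ℝ} (hσ : σ ∈ Ioo (1/2 : ℝ) 2) :
    Integrable (Gker σ t) := by
  obtain ⟨C, hC, hbound⟩ := exists_norm_GkerComplex_le t hσ.1
  set m := Real.sin (π * σ / 2)
  have hm : 0 < m :=
    Real.sin_pos_of_pos_of_lt_pi (by nlinarith [pi_pos, hσ.1]) (by nlinarith [pi_pos, hσ.2])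
  have him (x : ℝ) : ((x : ℂ) + (-σ : ℝ) * I).im = -σ := by simp
  have hcont : Continuous (Gker σ t) := by
    rw [Gker_eq_GkerComplex]
    refine (differentiableOn_GkerComplex t).continuousOn.comp_continuous (by fun_prop)
      fun x => ⟨trivial, ?_⟩
    rw [mem_preimage, him, mem_Ioo]
    constructor <;> linarith [hσ.1, hσ.2]
  refine (integrable_inv_one_add_sq.const_mul (C / m)).mono' hcont.aestronglyMeasurable
    (ae_of_all _ fun x => ?_)
  set w : ℂ := π * (x + (-σ : ℝ) * I) / 2
  have hsinh : m * (1 + x ^ 2) ≤ ‖Complex.sinh w‖ := by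
    have h := abs_sin_im_mul_cosh_re_le_norm_sinh w
    rw [show w.re = π * x / 2 by simp [w], show w.im = -(π * σ / 2) by simp [w]; ring,
      Real.sin_neg, abs_neg, abs_of_pos hm] at h
    have hcosh : 1 + x ^ 2 ≤ Real.cosh (π * x / 2) := by
      have hπ : 8 ≤ π ^ 2 := by nlinarith [pi_gt_three]
      nlinarith [Real.one_add_sq_div_two_le_cosh (π * x / 2),
        mul_le_mul_of_nonneg_right hπ (sq_nonneg x)]
    nlinarith
  rw [Gker_eq_GkerComplex]
  calc ‖GkerComplex t (x + (-σ : ℝ) * I)‖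
      ≤ C / ‖Complex.sinh w‖ :=
        hbound _ (by rw [mem_Icc, him]; constructor <;> linarith [hσ.2])
    _ ≤ C / (m * (1 + x ^ 2)) := div_le_div_of_nonneg_left hC (by positivity) hsinh
    _ = C / m * (1 + x ^ 2)⁻¹ := by rw [← div_div, div_eq_mul_inv]

lemma integral_Gker_eq (t : ℝ) {σ₁ σ₂ : ℝ} (h₁ : σ₁ ∈ Ioo (1/2 : ℝ) 2)
    (h₂ : σ₂ ∈ Ioo (1/2 : ℝ) 2) : ∫ s, Gker σ₁ t s = ∫ s, Gker σ₂ t s := by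
  obtain ⟨C, hC, hbound⟩ := exists_norm_GkerComplex_le t (lt_min h₁.1 h₂.1)
  have hseg : ∀ y ∈ [[-σ₁, -σ₂]], -2 < y ∧ y ≤ -min σ₁ σ₂ := fun y hy => by
    rcases mem_uIcc.mp hy with h | h <;>
      constructor <;> linarith [min_le_left σ₁ σ₂, min_le_right σ₁ σ₂, h₁.2, h₂.2]
  have hint₁ := integrable_Gker t h₁
  have hint₂ := integrable_Gker t h₂
  simp only [Gker_eq_GkerComplex] at hint₁ hint₂ ⊢
  refine integral_add_mul_I_eq_of_differentiableOn ((differentiableOn_GkerComplex t).mono ?_)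
    hint₁ hint₂ ?_
  · rintro z ⟨-, hz⟩
    exact ⟨trivial, (hseg _ hz).1, by linarith [(hseg _ hz).2, lt_min h₁.1 h₂.1]⟩
  refine tendsto_intervalIntegral_zero_of_norm_le (g := fun x => C * ‖x‖⁻¹)
    (by simpa using (tendsto_norm_cocompact_atTop (E := ℝ)).inv_tendsto_atTop.const_mul C) ?_
  filter_upwards [(isCompact_singleton : IsCompact ({0} : Set ℝ)).compl_mem_cocompact]
    with x hx0 y hy
  have hx : 0 < |x| := abs_pos.mpr hx0
  have hsinh : |x| ≤ ‖Complex.sinh (π * (x + y * I) / 2)‖ := by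
    have h := abs_sinh_re_le_norm_sinh (π * (x + y * I) / 2)
    rw [show (π * (x + y * I) / 2 : ℂ).re = π * x / 2 by simp] at h
    have := Real.abs_le_abs_sinh (π * x / 2)
    rw [abs_div, abs_mul, abs_of_pos pi_pos, abs_two] at this
    nlinarith [pi_gt_three]
  calc ‖GkerComplex t (x + y * I)‖
      ≤ C / ‖Complex.sinh (π * (x + y * I) / 2)‖ := by
        refine hbound _ ?_
        simpa using ⟨(hseg y (uIoc_subset_uIcc hy)).1.le, (hseg y (uIoc_subset_uIcc hy)).2⟩
    _ ≤ C / |x| := div_le_div_of_nonneg_left hC hx hsinh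
    _ = C * ‖x‖⁻¹ := by rw [Real.norm_eq_abs, div_eq_mul_inv]

theorem stmt_7_general (t : ℝ) :
    (∀ σ ∈ Ioo (1/2 : ℝ) 2, Integrable (Gker σ t)) ∧
    (∀ σ₁ ∈ Ioo (1/2 : ℝ) 2, ∀ σ₂ ∈ Ioo (1/2 : ℝ) 2, G σ₁ t = G σ₂ t) :=
  ⟨fun _ hσ => integrable_Gker t hσ,
    fun _ h₁ _ h₂ => by rw [G, G, integral_Gker_eq t h₁ h₂]⟩

theorem stmt_7 (t : ℝ) (ht : 0 < t) :
    (∀ σ ∈ Ioo (1/2 : ℝ) 2, Integrable (Gker σ t)) ∧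
    (∀ σ₁ ∈ Ioo (1/2 : ℝ) 2, ∀ σ₂ ∈ Ioo (1/2 : ℝ) 2, G σ₁ t = G σ₂ t) :=
  stmt_7_general t
end
end

section
/- Fix σ ∈ (1/2, 2). For every σ' ∈ (1/2, 2), there exist constants C > 0, K > 0 and t₀ > 0 such that for all real t ≥ t₀, setting b = C·log t, one has |G_σ(t) − (1/(2πi)) ∫_{−b}^{b} (t/(2π))^{i(s−iσ')/2} · ζ(1/2 + σ' + i(t+s)) · π/(2 sinh(π(s−iσ')/2)) ds| ≤ K·t^{−2}. -/
open Complex MeasureTheory Real Set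

noncomputable section

/-!
Writing `w = s - iσ`, the integrand of `G_σ(t)` is the restriction to the line `Im w = -σ` of one
function of `w`, holomorphic in the strip `-2 < Im w < -1/2` (the zeta factor stays in `Re > 1`
and `sinh (π w / 2)` has no zeros there). Where `|Re w| ≥ 1` in that strip it is
`O(t e^{-π |Re w| / 2})`, so both tails `|s| > b` of the integral and the two vertical sides of the
rectangle `[-b, b] × [-σ, -σ']` are `O(t e^{-π b / 2})`; by Cauchy's theorem these bound the
difference between the full integral at `σ` and the truncated one at `σ'`. For `b = 2 log t` this is
`O(t^{1-π})`, hence `O(t^{-2})`.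
-/

open Filter Asymptotics
open scoped Interval

lemma exists_norm_riemannZeta_le {a : ℝ} (ha : 1 < a) :
    ∃ M > 0, ∀ z : ℂ, a ≤ z.re → ‖riemannZeta z‖ ≤ M := by
  have hsum : Summable fun n : ℕ => 1 / (n : ℝ) ^ a := Real.summable_one_div_nat_rpow.mpr ha
  refine ⟨∑' n : ℕ, 1 / (n : ℝ) ^ a,
    hsum.tsum_pos (fun n => by positivity) 1 (by norm_num), fun z hz => ?_⟩
  have hz1 : 1 < z.re := ha.trans_le hz
  rw [zeta_eq_tsum_one_div_nat_cpow hz1]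
  refine tsum_of_norm_bounded hsum.hasSum fun n => ?_
  rw [norm_div, norm_one, norm_natCast_cpow_of_re_ne_zero n (by linarith)]
  rcases n.eq_zero_or_pos with rfl | hn
  · simp [Real.zero_rpow (by linarith : z.re ≠ 0), Real.zero_rpow (by linarith : a ≠ 0)]
  · gcongr
    exact_mod_cast hn

lemma Complex.sinh_abs_re_le_norm_sinh (z : ℂ) : Real.sinh |z.re| ≤ ‖Complex.sinh z‖ := by
  have h := abs_norm_sub_norm_le (Complex.exp z) (Complex.exp (-z))
  have h2 : Real.exp z.re - Real.exp (-z.re) = 2 * Real.sinh z.re := by rw [Real.sinh_eq]; ring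
  rw [Complex.norm_exp, Complex.norm_exp, Complex.neg_re, ← Complex.two_sinh, norm_mul, h2,
    abs_mul, Real.abs_sinh] at h
  norm_num at h
  exact h

lemma Complex.norm_inv_sinh_le {z : ℂ} (hz : 1 ≤ |z.re|) :
    ‖(Complex.sinh z)⁻¹‖ ≤ 4 * Real.exp (-|z.re|) := by
  have hexp : 2 ≤ Real.exp |z.re| := by linarith [Real.add_one_le_exp |z.re|]
  have hsinh : Real.exp |z.re| / 4 ≤ Real.sinh |z.re| := by
    rw [Real.sinh_eq]
    linarith [Real.exp_le_one_iff.mpr (by linarith : -|z.re| ≤ 0)]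
  rw [norm_inv, Real.exp_neg, ← div_eq_mul_inv, ← one_div_div, ← one_div]
  exact one_div_le_one_div_of_le (by positivity) (hsinh.trans z.sinh_abs_re_le_norm_sinh)

lemma Complex.sinh_ne_zero_of_im_mem_Ioo {z : ℂ} (hz : z.im ∈ Ioo (-π) 0) :
    Complex.sinh z ≠ 0 := by
  intro h
  obtain ⟨k, hk⟩ := Complex.sin_eq_zero_iff.mp
    (show Complex.sin (z * I) = 0 by rw [Complex.sin_mul_I, h, zero_mul])
  have hre : -z.im = k * π := by simpa using congrArg Complex.re hk
  have h0 : (0 : ℝ) < k := by nlinarith [hz.2, Real.pi_pos]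
  have h1 : (k : ℝ) < 1 := by nlinarith [hz.1, Real.pi_pos]
  norm_cast at h0 h1
  omega

section ExpDecay

variable {E : Type*} [NormedAddCommGroup E] {f : ℝ → E} {A c R : ℝ}

lemma integrable_of_norm_le_exp_neg_abs (hf : Continuous f) (hc : 0 < c)
    (hbound : ∀ s, R ≤ |s| → ‖f s‖ ≤ A * Real.exp (-c * |s|)) : Integrable f := by
  refine hf.locallyIntegrable.integrable_of_isBigO_atBot_atTop
    (g := fun s => Real.exp (c * s)) ?_ ⟨Iic 0, Iic_mem_atBot 0, integrableOn_exp_mul_Iic hc 0⟩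
    (g' := fun s => Real.exp (-c * s)) ?_
    ⟨Ioi 0, Ioi_mem_atTop 0, integrableOn_exp_mul_Ioi (neg_neg_of_pos hc) 0⟩
  · refine IsBigO.of_bound A ?_
    filter_upwards [eventually_le_atBot (min (-R) 0)] with s hs
    have hs0 : s ≤ 0 := hs.trans (min_le_right _ _)
    have := hbound s (by rw [abs_of_nonpos hs0]; linarith [min_le_left (-R) 0])
    rwa [abs_of_nonpos hs0, neg_mul_neg, ← Real.norm_of_nonneg (Real.exp_pos _).le] at this
  · refine IsBigO.of_bound A ?_
    filter_upwards [eventually_ge_atTop (max R 0)] with s hs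
    have hs0 : 0 ≤ s := (le_max_right _ _).trans hs
    have := hbound s (by rw [abs_of_nonneg hs0]; linarith [le_max_left R 0])
    rwa [abs_of_nonneg hs0, ← Real.norm_of_nonneg (Real.exp_pos _).le] at this

variable [NormedSpace ℝ E]

lemma norm_integral_sub_intervalIntegral_le (hf : Integrable f) (hc : 0 < c) (hR : 0 ≤ R)
    (hbound : ∀ s, R ≤ |s| → ‖f s‖ ≤ A * Real.exp (-c * |s|)) :
    ‖(∫ s, f s) - ∫ s in -R..R, f s‖ ≤ 2 * (A * Real.exp (-c * R) / c) := by
  have hsplit : (∫ s, f s) - ∫ s in -R..R, f s = (∫ s in Iic (-R), f s) + ∫ s in Ioi R, f s := by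
    rw [← intervalIntegral.integral_Iic_add_Ioi hf.integrableOn hf.integrableOn,
      ← intervalIntegral.integral_Iic_sub_Iic hf.integrableOn hf.integrableOn]
    abel
  have hleft : ‖∫ s in Iic (-R), f s‖ ≤ A * Real.exp (-c * R) / c := by
    refine (MeasureTheory.norm_integral_le_of_norm_le
      ((integrableOn_exp_mul_Iic hc (-R)).const_mul A)
      (ae_restrict_of_forall_mem measurableSet_Iic fun s hs => ?_)).trans_eq ?_
    · have hs0 : s ≤ 0 := (mem_Iic.mp hs).trans (by linarith)
      simpa [abs_of_nonpos hs0] using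
        hbound s (by rw [abs_of_nonpos hs0]; linarith [mem_Iic.mp hs])
    · rw [MeasureTheory.integral_const_mul, integral_exp_mul_Iic hc, mul_neg, neg_mul,
        mul_div_assoc]
  have hright : ‖∫ s in Ioi R, f s‖ ≤ A * Real.exp (-c * R) / c := by
    refine (MeasureTheory.norm_integral_le_of_norm_le
      ((integrableOn_exp_mul_Ioi (neg_neg_of_pos hc) R).const_mul A)
      (ae_restrict_of_forall_mem measurableSet_Ioi fun s hs => ?_)).trans_eq ?_
    · have hs0 : 0 ≤ s := hR.trans (mem_Ioi.mp hs).le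
      simpa [abs_of_nonneg hs0] using
        hbound s (by rw [abs_of_nonneg hs0]; exact (mem_Ioi.mp hs).le)
    · rw [MeasureTheory.integral_const_mul, integral_exp_mul_Ioi (neg_neg_of_pos hc),
        neg_div_neg_eq, mul_div_assoc]
  rw [hsplit]
  calc _ ≤ ‖∫ s in Iic (-R), f s‖ + ‖∫ s in Ioi R, f s‖ := norm_add_le _ _
    _ ≤ _ := by linarith

end ExpDecay

lemma Complex.norm_intervalIntegral_sub_le_of_differentiableOn_rect {E : Type*}
    [NormedAddCommGroup E] [NormedSpace ℂ E] {f : ℂ → E} {x₁ x₂ y₁ y₂ B : ℝ}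
    (hf : DifferentiableOn ℂ f ([[x₁, x₂]] ×ℂ [[y₁, y₂]]))
    (hB : ∀ x ∈ ({x₁, x₂} : Set ℝ), ∀ y ∈ [[y₁, y₂]], ‖f (x + y * I)‖ ≤ B) :
    ‖(∫ x in x₁..x₂, f (x + y₁ * I)) - ∫ x in x₁..x₂, f (x + y₂ * I)‖ ≤ 2 * (B * |y₂ - y₁|) := by
  have hside : ∀ x ∈ ({x₁, x₂} : Set ℝ), ‖∫ y in y₁..y₂, f (x + y * I)‖ ≤ B * |y₂ - y₁| :=
    fun x hx => intervalIntegral.norm_integral_le_of_norm_le_const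
      fun y hy => hB x hx y (uIoc_subset_uIcc hy)
  have hcauchy := Complex.integral_boundary_rect_eq_zero_of_differentiableOn f
    (x₁ + y₁ * I) (x₂ + y₂ * I) (by simpa using hf)
  simp only [add_re, ofReal_re, mul_re, I_re, mul_zero, ofReal_im, I_im, mul_one, sub_self,
    add_zero, add_im, mul_im, zero_add] at hcauchy
  rw [show (∫ x in x₁..x₂, f (x + y₁ * I)) - ∫ x in x₁..x₂, f (x + y₂ * I)
      = I • (∫ y in y₁..y₂, f (x₁ + y * I)) - I • ∫ y in y₁..y₂, f (x₂ + y * I) by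
    linear_combination (norm := module) hcauchy]
  calc _ ≤ ‖I • ∫ y in y₁..y₂, f (x₁ + y * I)‖ + ‖I • ∫ y in y₁..y₂, f (x₂ + y * I)‖ :=
        norm_sub_le _ _
    _ ≤ B * |y₂ - y₁| + B * |y₂ - y₁| := by
        rw [norm_smul, norm_smul, norm_I, one_mul, one_mul]
        exact add_le_add (hside x₁ (by simp)) (hside x₂ (by simp))
    _ = _ := by ring

def GkerHol (t : ℝ) (w : ℂ) : ℂ :=
  Complex.exp (I * w / 2 * Real.log (t / (2 * π))) * riemannZeta (1/2 + I * t + I * w) *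
    (π / (2 * Complex.sinh (π * w / 2)))

lemma Gker_eq_GkerHol (σ t s : ℝ) : Gker σ t s = GkerHol t (s + (-σ : ℝ) * I) := by
  have hw : (s : ℂ) - I * σ = s + (-σ : ℝ) * I := by push_cast; ring
  rw [← hw, Gker, GkerHol]
  congr 3
  linear_combination (σ : ℂ) * I_sq

lemma differentiableAt_GkerHol (t : ℝ) {w : ℂ} (hw : w.im ∈ Ioo (-2) (-(1/2))) :
    DifferentiableAt ℂ (GkerHol t) w := by
  have hpole : 1/2 + I * t + I * w ≠ 1 := fun h => by
    have := congrArg re h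
    simp at this
    linarith [hw.2]
  have hsinh : Complex.sinh (π * w / 2) ≠ 0 := by
    refine Complex.sinh_ne_zero_of_im_mem_Ioo ?_
    have him : (π * w / 2 : ℂ).im = π / 2 * w.im := by simp; ring
    rw [him]
    constructor <;> nlinarith [hw.1, hw.2, Real.pi_pos]
  unfold GkerHol
  refine DifferentiableAt.mul (DifferentiableAt.mul (by fun_prop) ?_) ?_
  · exact (differentiableAt_riemannZeta hpole).comp w (by fun_prop)
  · exact (differentiableAt_const _).div (by fun_prop) (mul_ne_zero two_ne_zero hsinh)

lemma continuous_Gker {σ : ℝ} (hσ : σ ∈ Ioo (1/2) 2) (t : ℝ) : Continuous (Gker σ t) := by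
  rw [funext (Gker_eq_GkerHol σ t), continuous_iff_continuousAt]
  intro s
  refine ContinuousAt.comp (g := GkerHol t) ?_ (by fun_prop)
  exact (differentiableAt_GkerHol t (by simp; constructor <;> linarith [hσ.1, hσ.2])).continuousAt

lemma norm_GkerHol_le {t M : ℝ} {w : ℂ} (ht : 1 ≤ t) (him : w.im ∈ Icc (-2) 0)
    (hre : 1 ≤ |w.re|) (hζ : ‖riemannZeta (1/2 + I * t + I * w)‖ ≤ M) :
    ‖GkerHol t w‖ ≤ 2 * π * M * t * Real.exp (-(π/2) * |w.re|) := by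
  have hexp : ‖Complex.exp (I * w / 2 * Real.log (t / (2 * π)))‖ ≤ t := by
    have hlog : Real.log (t / (2 * π)) ≤ Real.log t :=
      Real.log_le_log (by positivity) (div_le_self (by linarith) (by linarith [Real.two_le_pi]))
    have hθ : -w.im / 2 * Real.log (t / (2 * π)) ≤ Real.log t := by
      nlinarith [him.1, him.2, Real.log_nonneg ht]
    have hre : (I * w / 2 * Real.log (t / (2 * π))).re
        = -w.im / 2 * Real.log (t / (2 * π)) := by
      simp
    rw [Complex.norm_exp, hre]
    exact (Real.exp_le_exp.mpr hθ).trans_eq (Real.exp_log (by linarith))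
  have hsinh : ‖(π : ℂ) / (2 * Complex.sinh (π * w / 2))‖
      ≤ 2 * π * Real.exp (-(π/2) * |w.re|) := by
    have hre' : |(π * w / 2 : ℂ).re| = π / 2 * |w.re| := by
      have : (π * w / 2 : ℂ).re = π / 2 * w.re := by simp; ring
      rw [this, abs_mul, abs_of_pos (by positivity : 0 < π / 2)]
    have := Complex.norm_inv_sinh_le (z := π * w / 2) (by rw [hre']; nlinarith [Real.two_le_pi])
    rw [hre'] at this
    rw [div_eq_mul_inv, mul_inv, norm_mul, norm_mul, norm_inv, Complex.norm_real,
      Real.norm_of_nonneg Real.pi_pos.le, Complex.norm_ofNat]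
    calc _ ≤ π * (2⁻¹ * (4 * Real.exp (-(π / 2 * |w.re|)))) := by gcongr
      _ = _ := by ring_nf
  have hM : 0 ≤ M := (norm_nonneg _).trans hζ
  rw [GkerHol, norm_mul, norm_mul]
  calc _ ≤ t * M * (2 * π * Real.exp (-(π/2) * |w.re|)) := by gcongr
    _ = _ := by ring

lemma norm_integral_Gker_sub_intervalIntegral_Gker_le {σ σ' a M t b : ℝ} (ha : 1/2 < a)
    (hσ : σ ∈ Ico a 2) (hσ' : σ' ∈ Ico a 2)
    (hM : ∀ z : ℂ, 1/2 + a ≤ z.re → ‖riemannZeta z‖ ≤ M) (ht : 1 ≤ t) (hb : 1 ≤ b) :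
    ‖(∫ s, Gker σ t s) - ∫ s in -b..b, Gker σ' t s‖
      ≤ 8 * (1 + π) * M * t * Real.exp (-(π/2) * b) := by
  set A := 2 * π * M * t
  have hbound : ∀ w : ℂ, w.im ∈ Icc (-2) (-a) → 1 ≤ |w.re| →
      ‖GkerHol t w‖ ≤ A * Real.exp (-(π/2) * |w.re|) := fun w hw hre =>
    norm_GkerHol_le ht ⟨hw.1, by linarith [hw.2]⟩ hre (hM _ (by simp; linarith [hw.2]))
  have hline : ∀ s, 1 ≤ |s| → ‖Gker σ t s‖ ≤ A * Real.exp (-(π/2) * |s|) := fun s hs => by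
    rw [Gker_eq_GkerHol]
    simpa using hbound (s + (-σ : ℝ) * I) (by simp; constructor <;> linarith [hσ.1, hσ.2])
      (by simpa using hs)
  have htail : ‖(∫ s, Gker σ t s) - ∫ s in -b..b, Gker σ t s‖
      ≤ 2 * (A * Real.exp (-(π/2) * b) / (π/2)) :=
    norm_integral_sub_intervalIntegral_le
      (integrable_of_norm_le_exp_neg_abs (continuous_Gker ⟨by linarith [hσ.1], hσ.2⟩ t)
        (by positivity) hline)
      (by positivity) (by linarith) fun s hs => hline s (hb.trans hs)
  have hshift : ‖(∫ s in -b..b, Gker σ t s) - ∫ s in -b..b, Gker σ' t s‖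
      ≤ 2 * (A * Real.exp (-(π/2) * b) * |-σ' - -σ|) := by
    have hstrip : [[-σ, -σ']] ⊆ Icc (-max σ σ') (-a) :=
      uIcc_subset_Icc ⟨by simp, by linarith [hσ.1]⟩ ⟨by simp, by linarith [hσ'.1]⟩
    have hb0 : 0 ≤ b := by linarith
    have hmax : max σ σ' < 2 := max_lt hσ.2 hσ'.2
    simp_rw [Gker_eq_GkerHol]
    refine Complex.norm_intervalIntegral_sub_le_of_differentiableOn_rect
      (fun w hw => (differentiableAt_GkerHol t ?_).differentiableWithinAt) fun x hx y hy => ?_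
    · have := hstrip hw.2
      exact ⟨by linarith [this.1], by linarith [this.2]⟩
    · have hx' : |x| = b := by
        rcases hx with rfl | rfl <;> simp [abs_of_nonneg hb0]
      have := hstrip hy
      simpa [hx'] using hbound (x + y * I) ⟨by simp; linarith [this.1], by simpa using this.2⟩
        (by simp [hx', hb])
  have hσσ' : |-σ' - -σ| ≤ 2 := abs_le.mpr ⟨by linarith [hσ.1, hσ'.2], by linarith [hσ.2, hσ'.1]⟩
  calc _ ≤ ‖(∫ s, Gker σ t s) - ∫ s in -b..b, Gker σ t s‖
        + ‖(∫ s in -b..b, Gker σ t s) - ∫ s in -b..b, Gker σ' t s‖ :=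
        norm_sub_le_norm_sub_add_norm_sub _ _ _
    _ ≤ 2 * (A * Real.exp (-(π/2) * b) / (π/2)) + 2 * (A * Real.exp (-(π/2) * b) * 2) := by
        have hM0 : 0 ≤ M := (norm_nonneg _).trans (hM (1/2 + a : ℝ) (by simp))
        exact add_le_add htail (hshift.trans (by gcongr))
    _ = _ := by
        field_simp
        ring

theorem stmt_8 (σ : ℝ) (hσ : σ ∈ Ioo (1/2 : ℝ) 2) (σ' : ℝ) (hσ' : σ' ∈ Ioo (1/2 : ℝ) 2) :
    ∃ C > (0 : ℝ), ∃ K > (0 : ℝ), ∃ t₀ > (0 : ℝ), ∀ t : ℝ, t₀ ≤ t →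
      ‖G σ t - (2 * (π : ℂ) * Complex.I)⁻¹ *
          ∫ s in (-(C * Real.log t))..(C * Real.log t), Gker σ' t s‖
        ≤ K * t ^ (-(2 : ℝ)) := by
  have ha : 1/2 < min σ σ' := lt_min hσ.1 hσ'.1
  obtain ⟨M, hM0, hM⟩ := exists_norm_riemannZeta_le (a := 1/2 + min σ σ') (by linarith)
  refine ⟨2, two_pos, 8 * (1 + π) * M, by positivity, Real.exp 1, Real.exp_pos 1, fun t ht => ?_⟩
  have ht0 : 0 < t := (Real.exp_pos 1).trans_le ht
  have ht1 : 1 ≤ t := (Real.one_le_exp_iff.mpr zero_le_one).trans ht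
  have hlog : 1 ≤ Real.log t := (Real.le_log_iff_exp_le ht0).mpr ht
  have hshift := norm_integral_Gker_sub_intervalIntegral_Gker_le ha
    ⟨min_le_left σ σ', hσ.2⟩ ⟨min_le_right σ σ', hσ'.2⟩ hM ht1 (by linarith : 1 ≤ 2 * Real.log t)
  have hdecay : t * Real.exp (-(π/2) * (2 * Real.log t)) ≤ t ^ (-(2 : ℝ)) := by
    nth_rewrite 1 [← Real.exp_log ht0]
    rw [← Real.exp_add, Real.rpow_def_of_pos ht0]
    exact Real.exp_le_exp.mpr (by nlinarith [Real.pi_gt_three])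
  have hinv : ‖(2 * (π : ℂ) * I)⁻¹‖ ≤ 1 := by
    rw [norm_inv, norm_mul, norm_mul, Complex.norm_real, norm_I, Complex.norm_ofNat,
      Real.norm_of_nonneg Real.pi_pos.le]
    exact inv_le_one_of_one_le₀ (by nlinarith [Real.pi_gt_three])
  rw [G, ← mul_sub, norm_mul]
  calc _ ≤ 1 * (8 * (1 + π) * M * t * Real.exp (-(π/2) * (2 * Real.log t))) := by gcongr
    _ ≤ _ := by
        rw [one_mul, mul_assoc _ t]
        gcongr
end
end

section
/- Fix σ ∈ (1/2, 2). For every real t > 0, the series Σ_{n=1}^∞ n^{−1/2−it} · t/(2πn² + t) converges and G_σ(t) = Σ_{n=1}^∞ n^{−1/2−it} · t/(2πn² + t). -/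
open Complex MeasureTheory Real Set

noncomputable section

/-!
Expanding `ζ(1/2 + σ + i(t+s))` in its Dirichlet series (absolutely convergent as `σ > 1/2`) and
putting `w = (σ + is)/2`, the `n`-th term of the integrand becomes
`(i/2) · (n+1)^(-1/2-it) · x_n^(-w) · π / sin (π w)` with `x_n = 2π(n+1)²/t`.
Since `π / sin (π w)` is the Mellin transform of `(1 + x)⁻¹` on `0 < re w < 1` (a Beta integral),
Mellin inversion on the line `re w = σ/2` evaluates the integral of that term to
`2πi · (n+1)^(-1/2-it) / (1 + x_n)`. Summing under the integral is legitimate because the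
`L¹` norm of the `n`-th term is a constant times `(n+1)^(-1/2-σ)`.
-/

lemma one_add_sq_le_two_mul_cosh_pi_mul (y : ℝ) : 1 + y ^ 2 ≤ 2 * Real.cosh (π * y) := by
  rw [← Real.cosh_abs, Real.cosh_eq]
  have hexp := Real.quadratic_le_exp_of_nonneg (abs_nonneg (π * y))
  have hsq : |π * y| ^ 2 = π ^ 2 * y ^ 2 := by rw [sq_abs]; ring
  have hπ : 2 ≤ π ^ 2 := by nlinarith [Real.pi_gt_three]
  nlinarith [Real.exp_pos (-|π * y|), abs_nonneg (π * y),
    mul_le_mul_of_nonneg_right hπ (sq_nonneg y)]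

lemma sin_mul_cosh_le_norm_sin (x y : ℝ) :
    Real.sin x * Real.cosh y ≤ ‖Complex.sin (x + y * I)‖ := by
  calc Real.sin x * Real.cosh y = (Complex.sin (x + y * I)).re := by
        simp [Complex.sin_add_mul_I, ← Complex.ofReal_sin, ← Complex.ofReal_cosh,
          ← Complex.ofReal_cos, ← Complex.ofReal_sinh]
    _ ≤ ‖Complex.sin (x + y * I)‖ := Complex.re_le_norm _

lemma norm_pi_div_sin_le {c : ℝ} (hc0 : 0 < c) (hc1 : c < 1) (y : ℝ) :
    ‖(π : ℂ) / Complex.sin (π * (c + y * I))‖ ≤ 2 * π / Real.sin (π * c) * (1 + y ^ 2)⁻¹ := by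
  have hsin : 0 < Real.sin (π * c) :=
    Real.sin_pos_of_pos_of_lt_pi (by positivity) (by nlinarith [Real.pi_pos])
  have hlow : Real.sin (π * c) * (1 + y ^ 2) / 2 ≤ ‖Complex.sin (π * (c + y * I))‖ := by
    have h := sin_mul_cosh_le_norm_sin (π * c) (π * y)
    rw [show ((π * c : ℝ) : ℂ) + (π * y : ℝ) * I = π * (c + y * I) by push_cast; ring] at h
    nlinarith [one_add_sq_le_two_mul_cosh_pi_mul y]
  rw [norm_div, Complex.norm_real, Real.norm_of_nonneg Real.pi_pos.le]
  calc π / ‖Complex.sin (π * (c + y * I))‖ ≤ π / (Real.sin (π * c) * (1 + y ^ 2) / 2) :=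
        div_le_div_of_nonneg_left Real.pi_pos.le (by positivity) hlow
    _ = 2 * π / Real.sin (π * c) * (1 + y ^ 2)⁻¹ := by field_simp

lemma ofReal_cpow_eq_exp {r : ℝ} (hr : 0 < r) (z : ℂ) : (r : ℂ) ^ z = exp (Real.log r * z) := by
  rw [Complex.cpow_def_of_ne_zero (by exact_mod_cast hr.ne'), Complex.ofReal_log hr.le]

lemma hasDerivWithinAt_div_one_sub {u : ℝ} (hu : u ∈ Ioo (0 : ℝ) 1) :
    HasDerivWithinAt (fun u : ℝ => u / (1 - u)) ((1 - u) ^ 2)⁻¹ (Ioo 0 1) u := by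
  have h1u : 1 - u ≠ 0 := by linarith [hu.2]
  refine ((hasDerivAt_id' u).fun_div ((hasDerivAt_id' u).const_sub 1)
    h1u).hasDerivWithinAt.congr_deriv ?_
  field_simp
  ring

lemma injOn_div_one_sub : InjOn (fun u : ℝ => u / (1 - u)) (Ioo 0 1) := by
  intro a ha b hb hab
  have ha1 : 1 - a ≠ 0 := by linarith [ha.2]
  have hb1 : 1 - b ≠ 0 := by linarith [hb.2]
  rw [div_eq_div_iff ha1 hb1] at hab
  linarith

lemma image_div_one_sub_Ioo : (fun u : ℝ => u / (1 - u)) '' Ioo 0 1 = Ioi 0 := by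
  ext x
  constructor
  · rintro ⟨u, ⟨hu0, hu1⟩, rfl⟩
    exact div_pos hu0 (by linarith)
  · intro (hx : 0 < x)
    refine ⟨x / (1 + x), ⟨by positivity, (div_lt_one (by positivity)).mpr (by linarith)⟩, ?_⟩
    field_simp
    ring

/-- Under `x = u / (1 - u)`, the Mellin integrand of `(1 + x)⁻¹` becomes the Beta integrand. -/
lemma abs_deriv_smul_mellin_inv_one_add {u : ℝ} (hu : u ∈ Ioo (0 : ℝ) 1) (w : ℂ) :
    |((1 - u) ^ 2)⁻¹| • ((((u / (1 - u) : ℝ)) : ℂ) ^ (w - 1) • (1 + ((u / (1 - u) : ℝ) : ℂ))⁻¹) =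
      (u : ℂ) ^ (w - 1) * (1 - (u : ℂ)) ^ (1 - w - 1) := by
  obtain ⟨hu0, hu1⟩ := hu
  have h1u : 0 < 1 - u := by linarith
  have hinv : (1 + ((u / (1 - u) : ℝ) : ℂ))⁻¹ = ((1 - u : ℝ) : ℂ) := by
    rw [← ofReal_one, ← ofReal_add, ← ofReal_inv]
    congr 1
    field_simp
    ring
  have hsq : ((1 - u) ^ 2)⁻¹ = Real.exp (-(2 * Real.log (1 - u))) := by
    rw [Real.exp_neg, mul_comm, Real.exp_mul, Real.exp_log h1u]
    norm_cast
  rw [show (1 : ℂ) - u = ((1 - u : ℝ) : ℂ) by push_cast; ring, hinv,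
    abs_of_pos (by positivity), hsq, Complex.real_smul, smul_eq_mul,
    ofReal_cpow_eq_exp (div_pos hu0 h1u), ofReal_cpow_eq_exp hu0, ofReal_cpow_eq_exp h1u,
    Real.log_div hu0.ne' h1u.ne', ← Real.exp_log h1u, Complex.ofReal_exp, Complex.ofReal_exp,
    Real.log_exp, ← Complex.exp_add, ← Complex.exp_add, ← Complex.exp_add]
  congr 1
  push_cast
  ring

lemma mellinConvergent_inv_one_add {w : ℂ} (h0 : 0 < w.re) (h1 : w.re < 1) :
    MellinConvergent (fun x : ℝ => (1 + (x : ℂ))⁻¹) w := by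
  have hbeta := (intervalIntegrable_iff_integrableOn_Ioc_of_le zero_le_one).mp
    (Complex.betaIntegral_convergent h0 (by simpa using h1 : 0 < (1 - w).re))
  rw [MellinConvergent, ← image_div_one_sub_Ioo,
    integrableOn_image_iff_integrableOn_abs_deriv_smul measurableSet_Ioo
      (fun _ hu => hasDerivWithinAt_div_one_sub hu) injOn_div_one_sub]
  exact (hbeta.mono_set Ioo_subset_Ioc_self).congr_fun
    (fun u hu => (abs_deriv_smul_mellin_inv_one_add hu w).symm) measurableSet_Ioo

lemma mellin_inv_one_add {w : ℂ} (h0 : 0 < w.re) (h1 : w.re < 1) :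
    mellin (fun x : ℝ => (1 + (x : ℂ))⁻¹) w = π / Complex.sin (π * w) := by
  have hbeta : mellin (fun x : ℝ => (1 + (x : ℂ))⁻¹) w = Complex.betaIntegral w (1 - w) := by
    rw [mellin, ← image_div_one_sub_Ioo,
      integral_image_eq_integral_abs_deriv_smul measurableSet_Ioo
        (fun _ hu => hasDerivWithinAt_div_one_sub hu) injOn_div_one_sub,
      Complex.betaIntegral, intervalIntegral.integral_of_le zero_le_one,
      integral_Ioc_eq_integral_Ioo]
    exact setIntegral_congr_fun measurableSet_Ioo
      (fun u hu => abs_deriv_smul_mellin_inv_one_add hu w)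
  rw [hbeta, Complex.betaIntegral_eq_Gamma_mul_div _ _ h0 (by simpa using h1), add_sub_cancel,
    Complex.Gamma_one, div_one, Complex.Gamma_mul_Gamma_one_sub]

lemma verticalIntegrable_pi_div_sin {c : ℝ} (hc0 : 0 < c) (hc1 : c < 1) :
    VerticalIntegrable (fun s : ℂ => π / Complex.sin (π * s)) c :=
  (integrable_inv_one_add_sq.const_mul (2 * π / Real.sin (π * c))).mono'
    (by fun_prop : Measurable fun y : ℝ =>
      (π : ℂ) / Complex.sin (π * (c + y * I))).aestronglyMeasurable
    (ae_of_all _ (norm_pi_div_sin_le hc0 hc1))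

lemma mellinInv_pi_div_sin {c x : ℝ} (hc0 : 0 < c) (hc1 : c < 1) (hx : 0 < x) :
    mellinInv c (fun s : ℂ => π / Complex.sin (π * s)) x = (1 + (x : ℂ))⁻¹ := by
  have hmellin (y : ℝ) : mellin (fun x : ℝ => (1 + (x : ℂ))⁻¹) (c + y * I) =
      π / Complex.sin (π * (c + y * I)) :=
    mellin_inv_one_add (by simpa using hc0) (by simpa using hc1)
  have hcont : ContinuousAt (fun x : ℝ => (1 + (x : ℂ))⁻¹) x :=
    (by fun_prop : Continuous fun x : ℝ => 1 + (x : ℂ)).continuousAt.inv₀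
      (by exact_mod_cast (by linarith : (1 + x : ℝ) ≠ 0))
  have hvert : VerticalIntegrable (mellin fun x : ℝ => (1 + (x : ℂ))⁻¹) c := by
    simpa only [VerticalIntegrable, hmellin] using verticalIntegrable_pi_div_sin hc0 hc1
  calc mellinInv c (fun s : ℂ => π / Complex.sin (π * s)) x
      = mellinInv c (mellin fun x : ℝ => (1 + (x : ℂ))⁻¹) x := by simp only [mellinInv, hmellin]
    _ = (1 + (x : ℂ))⁻¹ := mellinInv_mellin_eq c _ hx
        (mellinConvergent_inv_one_add (by simpa using hc0) (by simpa using hc1)) hvert hcont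

section MellinInvIntegrand

variable {E : Type*} [NormedAddCommGroup E] [NormedSpace ℂ E]

def mellinInvIntegrand (c : ℝ) (f : ℂ → E) (x y : ℝ) : E :=
  (x : ℂ) ^ (-(c + y * I)) • f (c + y * I)

lemma integral_mellinInvIntegrand (c : ℝ) (f : ℂ → E) (x : ℝ) :
    ∫ y, mellinInvIntegrand c f x y = (2 * π) • mellinInv c f x := by
  rw [mellinInv, smul_smul, mul_one_div_cancel (by positivity), one_smul]
  rfl

lemma norm_mellinInvIntegrand {c x : ℝ} (f : ℂ → E) (hx : 0 < x) (y : ℝ) :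
    ‖mellinInvIntegrand c f x y‖ = x ^ (-c) * ‖f (c + y * I)‖ := by
  rw [mellinInvIntegrand, norm_smul, Complex.norm_cpow_eq_rpow_re_of_pos hx]
  simp

lemma integrable_mellinInvIntegrand {c x : ℝ} {f : ℂ → E} (hf : VerticalIntegrable f c)
    (hx : 0 < x) : Integrable (mellinInvIntegrand c f x) :=
  hf.bdd_smul (x ^ (-c))
    (by fun_prop : Measurable fun y : ℝ => (x : ℂ) ^ (-(c + y * I))).aestronglyMeasurable
    (ae_of_all _ fun y => by simp [Complex.norm_cpow_eq_rpow_re_of_pos hx])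

lemma integral_norm_mellinInvIntegrand {c x : ℝ} (f : ℂ → E) (hx : 0 < x) :
    ∫ y, ‖mellinInvIntegrand c f x y‖ = x ^ (-c) * ∫ y : ℝ, ‖f (c + y * I)‖ := by
  simp_rw [norm_mellinInvIntegrand f hx]
  exact integral_const_mul (x ^ (-c)) _

end MellinInvIntegrand

def zetaScale (t : ℝ) (n : ℕ) : ℝ := 2 * π * ((n : ℝ) + 1) ^ 2 / t

lemma zetaScale_pos {t : ℝ} (ht : 0 < t) (n : ℕ) : 0 < zetaScale t n := by
  unfold zetaScale
  positivity

lemma inv_one_add_zetaScale {t : ℝ} (ht : 0 < t) (n : ℕ) :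
    (1 + (zetaScale t n : ℂ))⁻¹ = t / (2 * π * ((n : ℂ) + 1) ^ 2 + t) := by
  have ht' : (t : ℂ) ≠ 0 := by exact_mod_cast ht.ne'
  rw [zetaScale]
  push_cast
  rw [one_add_div ht', inv_div, add_comm]

/-- The `n`-th term of the expansion of `Gker σ t s` obtained from the Dirichlet series of `ζ`. -/
def GkerTerm (σ t : ℝ) (n : ℕ) (s : ℝ) : ℂ :=
  (I / 2 * Complex.exp ((-(1/2 : ℂ) - I * t) * Real.log (n + 1))) *
    mellinInvIntegrand (σ / 2) (fun w : ℂ => π / Complex.sin (π * w)) (zetaScale t n) (s / 2)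

lemma pi_div_two_mul_sinh (σ s : ℝ) :
    (π : ℂ) / (2 * Complex.sinh (π * (s - I * σ) / 2)) =
      I / 2 * (π / Complex.sin (π * (((σ / 2 : ℝ) : ℂ) + ((s / 2 : ℝ) : ℂ) * I))) := by
  have hsin : Complex.sin (π * (((σ / 2 : ℝ) : ℂ) + ((s / 2 : ℝ) : ℂ) * I)) =
      Complex.sinh (π * (s - I * σ) / 2) * I := by
    rw [← Complex.sin_mul_I]
    congr 1
    push_cast
    linear_combination (π * σ / 2 : ℂ) * I_mul_I
  rw [hsin]
  generalize Complex.sinh (π * (s - I * σ) / 2) = S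
  simp only [div_eq_mul_inv, mul_inv, Complex.inv_I]
  linear_combination ((π : ℂ) * S⁻¹ / 2) * I_mul_I

lemma exp_mul_one_div_cpow_eq (σ : ℝ) {t : ℝ} (ht : 0 < t) (n : ℕ) (s : ℝ) :
    Complex.exp (I * ((s : ℂ) - I * σ) / 2 * Real.log (t / (2 * π))) *
        (1 / ((n : ℂ) + 1) ^ (1/2 + σ + I * ((t : ℂ) + s))) =
      Complex.exp ((-(1/2 : ℂ) - I * t) * Real.log (n + 1)) *
        (zetaScale t n : ℂ) ^ (-(((σ / 2 : ℝ) : ℂ) + ((s / 2 : ℝ) : ℂ) * I)) := by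
  have hn : (0 : ℝ) < n + 1 := by positivity
  have hlog : Real.log (zetaScale t n) = 2 * Real.log (n + 1) - Real.log (t / (2 * π)) := by
    rw [zetaScale, Real.log_div (by positivity) ht.ne',
      Real.log_mul (by positivity) (by positivity), Real.log_pow, Real.log_div ht.ne' (by positivity)]
    push_cast
    ring
  rw [show ((n : ℂ) + 1) = ((n + 1 : ℝ) : ℂ) by push_cast; ring, ofReal_cpow_eq_exp hn,
    ofReal_cpow_eq_exp (zetaScale_pos ht n), one_div, ← Complex.exp_neg, ← Complex.exp_add,
    ← Complex.exp_add, hlog]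
  congr 1
  push_cast
  linear_combination (-(σ * Real.log (t / (2 * π)) / 2 : ℂ)) * I_mul_I

lemma Gker_eq_tsum_GkerTerm {σ t : ℝ} (hσ : 1 / 2 < σ) (ht : 0 < t) (s : ℝ) :
    Gker σ t s = ∑' n, GkerTerm σ t n s := by
  have hre : 1 < (1 / 2 + σ + I * ((t : ℂ) + s)).re := by
    simp only [add_re, mul_re, I_re, I_im, ofReal_re]
    norm_num
    linarith
  rw [Gker, zeta_eq_tsum_one_div_nat_add_one_cpow hre, ← tsum_mul_left, ← tsum_mul_right]
  refine tsum_congr fun n => ?_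
  rw [GkerTerm, mellinInvIntegrand, smul_eq_mul, pi_div_two_mul_sinh,
    exp_mul_one_div_cpow_eq σ ht]
  ring

lemma integrable_GkerTerm {σ t : ℝ} (hσ0 : 0 < σ) (hσ2 : σ < 2) (ht : 0 < t) (n : ℕ) :
    Integrable (GkerTerm σ t n) :=
  ((integrable_mellinInvIntegrand (verticalIntegrable_pi_div_sin (by linarith) (by linarith))
    (zetaScale_pos ht n)).comp_div two_ne_zero).const_mul _

lemma integral_GkerTerm {σ t : ℝ} (hσ0 : 0 < σ) (hσ2 : σ < 2) (ht : 0 < t) (n : ℕ) :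
    ∫ s, GkerTerm σ t n s = 2 * π * I *
      (Complex.exp ((-(1/2 : ℂ) - I * t) * Real.log (n + 1)) *
        (t / (2 * π * ((n : ℂ) + 1) ^ 2 + t))) := by
  simp only [GkerTerm]
  rw [integral_const_mul, Measure.integral_comp_div
      (mellinInvIntegrand (σ / 2) (fun w : ℂ => π / Complex.sin (π * w)) (zetaScale t n)) 2,
    integral_mellinInvIntegrand, mellinInv_pi_div_sin (by linarith) (by linarith)
      (zetaScale_pos ht n), inv_one_add_zetaScale ht]
  simp only [abs_two, real_smul]
  push_cast
  ring

lemma integral_norm_GkerTerm {σ t : ℝ} (ht : 0 < t) (n : ℕ) :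
    ∫ s, ‖GkerTerm σ t n s‖ = (2 * π / t) ^ (-(σ / 2)) *
      (∫ y : ℝ, ‖(π : ℂ) / Complex.sin (π * ((σ / 2 : ℝ) + y * I))‖) *
        ((n : ℝ) + 1) ^ (-(1 / 2 + σ)) := by
  simp only [GkerTerm, norm_mul]
  rw [integral_const_mul, Measure.integral_comp_div (fun y =>
      ‖mellinInvIntegrand (σ / 2) (fun w : ℂ => π / Complex.sin (π * w)) (zetaScale t n) y‖) 2,
    integral_norm_mellinInvIntegrand _ (zetaScale_pos ht n)]
  have hn : (0 : ℝ) < n + 1 := by positivity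
  have hcoeff : ‖Complex.exp ((-(1/2 : ℂ) - I * t) * Real.log (n + 1))‖ =
      ((n : ℝ) + 1) ^ (-(1 / 2) : ℝ) := by
    rw [Complex.norm_exp, Real.rpow_def_of_pos hn]
    simp [mul_comm]
  have hscale : zetaScale t n ^ (-(σ / 2)) = (2 * π / t) ^ (-(σ / 2)) * ((n : ℝ) + 1) ^ (-σ) := by
    rw [zetaScale, show 2 * π * ((n : ℝ) + 1) ^ 2 / t = 2 * π / t * ((n : ℝ) + 1) ^ 2 by ring,
      Real.mul_rpow (by positivity) (by positivity), ← Real.rpow_natCast, ← Real.rpow_mul hn.le]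
    ring_nf
  rw [hcoeff, hscale, show -(1 / 2 + σ) = -(1 / 2) + -σ by ring, Real.rpow_add hn]
  simp only [norm_div, norm_I, RCLike.norm_ofNat, abs_two, smul_eq_mul]
  ring

lemma summable_integral_norm_GkerTerm {σ t : ℝ} (hσ : 1 / 2 < σ) (ht : 0 < t) :
    Summable fun n => ∫ s, ‖GkerTerm σ t n s‖ := by
  simp_rw [integral_norm_GkerTerm ht]
  refine Summable.mul_left _ ?_
  simpa using (summable_nat_add_iff 1).mpr
    (Real.summable_nat_rpow.mpr (by linarith : -(1 / 2 + σ) < -1))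

theorem stmt_13 (σ : ℝ) (hσ : σ ∈ Ioo (1/2 : ℝ) 2) (t : ℝ) (ht : 0 < t) :
    Summable (fun n : ℕ =>
      Complex.exp ((-(1/2 : ℂ) - Complex.I * t) * Real.log (n + 1)) *
        ((t : ℂ) / (2 * π * ((n : ℂ) + 1) ^ 2 + t))) ∧
    G σ t = ∑' n : ℕ,
      Complex.exp ((-(1/2 : ℂ) - Complex.I * t) * Real.log (n + 1)) *
        ((t : ℂ) / (2 * π * ((n : ℂ) + 1) ^ 2 + t)) := by
  obtain ⟨hσ1, hσ2⟩ := hσ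
  have hσ0 : 0 < σ := by linarith
  have hsum : HasSum (fun n => ∫ s, GkerTerm σ t n s) (∫ s, Gker σ t s) := by
    simpa only [← Gker_eq_tsum_GkerTerm hσ1 ht] using
      hasSum_integral_of_summable_integral_norm (integrable_GkerTerm hσ0 hσ2 ht)
        (summable_integral_norm_GkerTerm hσ1 ht)
  have h2πI : (2 * π * I : ℂ) ≠ 0 := by simp [Real.pi_ne_zero]
  have hG := hsum.mul_left (2 * π * I)⁻¹
  simp only [integral_GkerTerm hσ0 hσ2 ht, inv_mul_cancel_left₀ h2πI] at hG
  exact ⟨hG.summable, hG.tsum_eq.symm⟩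
end
end

section
/- Let K ≥ 1 be a natural number and let t be a complex number with |Im t| < 3/2 and t ≠ −2πn² for every integer n ≥ 1. Then both series below converge absolutely and Σ_{n=1}^∞ n^{−1/2−it} · t/(2πn² + t) = Σ_{k=1}^K (−1)^{k+1}·(t/(2π))^k·ζ(2k + 1/2 + it) + (−1)^K·(t/(2π))^K·Σ_{n=1}^∞ n^{−2K−1/2−it} · t/(2πn² + t). -/
/-!
With `m = n + 1`, the partial fraction identity
`t / (a m² + t) = (t / a) (m⁻² - m⁻² · t / (a m² + t))` rewrites the series with exponent `s` as
`(t / a) (ζ(s + 2) - (the same series with exponent s + 2))`; iterating this `K` times gives the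
formula, with `a = 2π` and `s = 1/2 + it`. Since `t / (a m² + t) = O(m⁻²)`, the series converges
absolutely as soon as `Re s > -1`, which is where `Im t < 3/2` enters.
-/

open Complex Real Filter

lemma Complex.exp_mul_log_natCast_add_one (c : ℂ) (n : ℕ) :
    exp (c * Real.log (n + 1)) = ((n : ℂ) + 1) ^ c := by
  rw [show ((n : ℝ) + 1) = ((n + 1 : ℕ) : ℝ) by push_cast; rfl, natCast_log,
    cpow_def_of_ne_zero (Nat.cast_add_one_ne_zero n), mul_comm]
  push_cast; rfl

lemma Complex.norm_natCast_add_one_cpow (n : ℕ) (s : ℂ) :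
    ‖((n : ℂ) + 1) ^ s‖ = ((n : ℝ) + 1) ^ s.re := by
  simpa using norm_natCast_cpow_of_pos n.succ_pos s

lemma Complex.summable_norm_natCast_add_one_cpow_neg {w : ℂ} (hw : 1 < w.re) :
    Summable fun n : ℕ => ‖((n : ℂ) + 1) ^ (-w)‖ := by
  simp only [norm_natCast_add_one_cpow, neg_re]
  exact_mod_cast (summable_nat_add_iff 1).mpr (Real.summable_nat_rpow.mpr (neg_lt_neg hw))

lemma Complex.natCast_add_one_cpow_neg_eq (s : ℂ) (n : ℕ) :
    ((n : ℂ) + 1) ^ (-s) = ((n : ℂ) + 1) ^ (-(s + 2)) * ((n : ℂ) + 1) ^ 2 := by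
  rw [← cpow_natCast, ← cpow_add _ _ (Nat.cast_add_one_ne_zero n)]
  push_cast; ring_nf

lemma Complex.re_add_two_mul_natCast (s : ℂ) (k : ℕ) : (s + 2 * k).re = s.re + 2 * k := by
  simp

lemma norm_div_add_le_of_two_mul_norm_le {𝕜 : Type*} [NormedField 𝕜] {w t : 𝕜}
    (h : 2 * ‖t‖ ≤ ‖w‖) : ‖t / (w + t)‖ ≤ 2 * ‖t‖ / ‖w‖ := by
  rcases eq_or_ne t 0 with rfl | ht
  · simp
  have hw : 0 < ‖w‖ := by linarith [norm_pos_iff.mpr ht]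
  have hwt : ‖w‖ / 2 ≤ ‖w + t‖ := by
    have := norm_sub_norm_le w (-t)
    rw [norm_neg, sub_neg_eq_add] at this
    linarith
  rw [norm_div, show 2 * ‖t‖ / ‖w‖ = ‖t‖ / (‖w‖ / 2) by field_simp]
  exact div_le_div_of_nonneg_left (norm_nonneg t) (by positivity) hwt

noncomputable def perturbedZetaTerm (a t s : ℂ) (n : ℕ) : ℂ :=
  ((n : ℂ) + 1) ^ (-s) * (t / (a * ((n : ℂ) + 1) ^ 2 + t))

namespace perturbedZetaTerm

variable {a t : ℂ}

lemma eventually_norm_le (ha : a ≠ 0) (s : ℂ) : ∀ᶠ n : ℕ in atTop,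
    ‖perturbedZetaTerm a t s n‖ ≤ 2 * ‖t‖ / ‖a‖ * ‖((n : ℂ) + 1) ^ (-(s + 2))‖ := by
  filter_upwards [tendsto_natCast_atTop_atTop.eventually_ge_atTop (2 * ‖t‖ / ‖a‖)] with n hn
  have hsq : (n : ℝ) ≤ ‖((n : ℂ) + 1) ^ 2‖ := by
    rw [norm_pow, show (n : ℂ) + 1 = ((n + 1 : ℝ) : ℂ) by push_cast; rfl, norm_real,
      Real.norm_of_nonneg (by positivity)]
    nlinarith
  have hbig : 2 * ‖t‖ ≤ ‖a * ((n : ℂ) + 1) ^ 2‖ := by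
    rw [norm_mul]
    have := (div_le_iff₀' (norm_pos_iff.mpr ha)).mp (hn.trans hsq)
    linarith
  rw [perturbedZetaTerm, natCast_add_one_cpow_neg_eq, norm_mul, norm_mul, mul_assoc, mul_comm]
  gcongr
  calc ‖((n : ℂ) + 1) ^ 2‖ * ‖t / (a * ((n : ℂ) + 1) ^ 2 + t)‖
      ≤ ‖((n : ℂ) + 1) ^ 2‖ * (2 * ‖t‖ / ‖a * ((n : ℂ) + 1) ^ 2‖) := by
        gcongr; exact norm_div_add_le_of_two_mul_norm_le hbig
    _ = 2 * ‖t‖ / ‖a‖ := by rw [norm_mul]; field_simp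

lemma summable_norm (ha : a ≠ 0) {s : ℂ} (hs : -1 < s.re) :
    Summable fun n => ‖perturbedZetaTerm a t s n‖ := by
  refine .of_norm_bounded_eventually_nat
    ((summable_norm_natCast_add_one_cpow_neg (w := s + 2) ?_).mul_left (2 * ‖t‖ / ‖a‖)) ?_
  · simp only [add_re, re_ofNat]; linarith
  · simpa only [norm_norm] using eventually_norm_le ha s

lemma eq_sub (ha : a ≠ 0) {n : ℕ} (hden : a * ((n : ℂ) + 1) ^ 2 + t ≠ 0) (s : ℂ) :
    perturbedZetaTerm a t s n =
      t / a * (((n : ℂ) + 1) ^ (-(s + 2)) - perturbedZetaTerm a t (s + 2) n) := by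
  rw [perturbedZetaTerm, perturbedZetaTerm, natCast_add_one_cpow_neg_eq]
  generalize ((n : ℂ) + 1) ^ 2 = m at hden ⊢
  rw [eq_comm, div_mul_eq_mul_div, div_eq_iff ha]
  field_simp
  ring

lemma tsum_eq_sub (ha : a ≠ 0) (hden : ∀ n : ℕ, a * ((n : ℂ) + 1) ^ 2 + t ≠ 0) {s : ℂ}
    (hs : -1 < s.re) :
    ∑' n, perturbedZetaTerm a t s n =
      t / a * (riemannZeta (s + 2) - ∑' n, perturbedZetaTerm a t (s + 2) n) := by
  have hs2 : 1 < (s + 2).re := by simp only [add_re, re_ofNat]; linarith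
  rw [tsum_congr fun n => eq_sub ha (hden n) s, tsum_mul_left,
    (summable_norm_natCast_add_one_cpow_neg hs2).of_norm.tsum_sub
      (summable_norm ha (by linarith)).of_norm,
    zeta_eq_tsum_one_div_nat_add_one_cpow hs2]
  simp only [cpow_neg, one_div]

lemma tsum_eq_sum_add (ha : a ≠ 0) (hden : ∀ n : ℕ, a * ((n : ℂ) + 1) ^ 2 + t ≠ 0) {s : ℂ}
    (hs : -1 < s.re) (K : ℕ) :
    ∑' n, perturbedZetaTerm a t s n =
      ∑ k ∈ Finset.Icc 1 K, (-1) ^ (k + 1) * (t / a) ^ k * riemannZeta (s + 2 * k) +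
        (-1) ^ K * (t / a) ^ K * ∑' n, perturbedZetaTerm a t (s + 2 * K) n := by
  induction K with
  | zero => simp
  | succ K ih =>
    have hsK : -1 < (s + 2 * K).re := by
      rw [re_add_two_mul_natCast]; linarith [K.cast_nonneg (α := ℝ)]
    rw [ih, Finset.sum_Icc_succ_top (by omega), tsum_eq_sub ha hden hsK]
    push_cast
    ring_nf

end perturbedZetaTerm

open perturbedZetaTerm in
theorem stmt_14_general (K : ℕ) (t : ℂ) (him : |t.im| < 3/2)
    (hpole : ∀ n : ℕ, 1 ≤ n → t ≠ -2 * π * (n : ℂ) ^ 2) :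
    Summable (fun n : ℕ =>
      ‖Complex.exp ((-(1/2 : ℂ) - Complex.I * t) * Real.log (n + 1)) *
        (t / (2 * π * ((n : ℂ) + 1) ^ 2 + t))‖) ∧
    Summable (fun n : ℕ =>
      ‖Complex.exp ((-(2 * K : ℂ) - 1/2 - Complex.I * t) * Real.log (n + 1)) *
        (t / (2 * π * ((n : ℂ) + 1) ^ 2 + t))‖) ∧
    (∑' n : ℕ, Complex.exp ((-(1/2 : ℂ) - Complex.I * t) * Real.log (n + 1)) *
        (t / (2 * π * ((n : ℂ) + 1) ^ 2 + t))) =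
      (∑ k ∈ Finset.Icc 1 K, (-1 : ℂ) ^ (k + 1) * (t / (2 * π)) ^ k *
          riemannZeta (2 * k + 1/2 + Complex.I * t)) +
        (-1 : ℂ) ^ K * (t / (2 * π)) ^ K *
          ∑' n : ℕ, Complex.exp ((-(2 * K : ℂ) - 1/2 - Complex.I * t) * Real.log (n + 1)) *
            (t / (2 * π * ((n : ℂ) + 1) ^ 2 + t)) := by
  have ha : (2 * π : ℂ) ≠ 0 := by exact_mod_cast Real.two_pi_pos.ne'
  have hden (n : ℕ) : 2 * π * ((n : ℂ) + 1) ^ 2 + t ≠ 0 := fun h =>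
    hpole (n + 1) n.succ_pos (by push_cast; linear_combination h)
  have hs : -1 < (1/2 + I * t).re := by
    simp only [add_re, mul_re, I_re, I_im, zero_mul, one_mul, zero_sub, div_ofNat_re, one_re]
    linarith [(abs_lt.mp him).2]
  have hsK : -1 < (1/2 + I * t + 2 * K).re := by
    rw [re_add_two_mul_natCast]; linarith [K.cast_nonneg (α := ℝ)]
  have hterm (s : ℂ) (n : ℕ) : exp (-s * Real.log (n + 1)) * (t / (2 * π * ((n : ℂ) + 1) ^ 2 + t))
      = perturbedZetaTerm (2 * π) t s n := by
    rw [exp_mul_log_natCast_add_one, perturbedZetaTerm]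
  rw [show -(1/2 : ℂ) - I * t = -(1/2 + I * t) by ring,
    show -(2 * K : ℂ) - 1/2 - I * t = -(1/2 + I * t + 2 * K) by ring]
  simp only [hterm]
  refine ⟨summable_norm ha hs, summable_norm ha hsK, ?_⟩
  rw [tsum_eq_sum_add ha hden hs K]
  congr 1
  exact Finset.sum_congr rfl fun k _ => by ring_nf

theorem stmt_14 (K : ℕ) (hK : 1 ≤ K) (t : ℂ) (him : |t.im| < 3/2)
    (hpole : ∀ n : ℕ, 1 ≤ n → t ≠ -2 * π * (n : ℂ) ^ 2) :
    Summable (fun n : ℕ =>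
      ‖Complex.exp ((-(1/2 : ℂ) - Complex.I * t) * Real.log (n + 1)) *
        (t / (2 * π * ((n : ℂ) + 1) ^ 2 + t))‖) ∧
    Summable (fun n : ℕ =>
      ‖Complex.exp ((-(2 * K : ℂ) - 1/2 - Complex.I * t) * Real.log (n + 1)) *
        (t / (2 * π * ((n : ℂ) + 1) ^ 2 + t))‖) ∧
    (∑' n : ℕ, Complex.exp ((-(1/2 : ℂ) - Complex.I * t) * Real.log (n + 1)) *
        (t / (2 * π * ((n : ℂ) + 1) ^ 2 + t))) =
      (∑ k ∈ Finset.Icc 1 K, (-1 : ℂ) ^ (k + 1) * (t / (2 * π)) ^ k *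
          riemannZeta (2 * k + 1/2 + Complex.I * t)) +
        (-1 : ℂ) ^ K * (t / (2 * π)) ^ K *
          ∑' n : ℕ, Complex.exp ((-(2 * K : ℂ) - 1/2 - Complex.I * t) * Real.log (n + 1)) *
            (t / (2 * π * ((n : ℂ) + 1) ^ 2 + t)) :=
  stmt_14_general K t him hpole
end

section
/- Let t be a complex number with |t| < 2π and Im t < 3/2. Then both series below converge and Σ_{n=1}^∞ n^{−1/2−it} · t/(2πn² + t) = Σ_{k=1}^∞ (−1)^{k+1}·(t/(2π))^k·ζ(2k + 1/2 + it). -/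
/-!
Since `‖z‖ < 1 ≤ (n + 1) ^ m`, the factor `z / ((n + 1) ^ m + z)` is the geometric series
`∑ₖ (-1) ^ k (z / (n + 1) ^ m) ^ (k + 1)`, which turns the left-hand side into a double series
whose rows, summed over `n`, are `(-1) ^ k z ^ (k + 1) ζ(s + m (k + 1))`. The double series is
dominated by `‖z‖ ^ (k + 1) (n + 1) ^ (-(Re s + m))`, which is summable when `Re s + m > 1`, so
the two orders of summation agree. The theorem is the case `s = 1/2 + it`, `z = t / 2π`, `m = 2`.
-/

open Complex MeasureTheory Real Set

noncomputable section

theorem Complex.exp_mul_ofReal_log {x : ℝ} (hx : 0 < x) (w : ℂ) :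
    Complex.exp (w * Real.log x) = (x : ℂ) ^ w := by
  rw [cpow_def_of_ne_zero (ofReal_ne_zero.mpr hx.ne'), ofReal_log hx.le, mul_comm]

theorem hasSum_nat_add_one_cpow_neg {s : ℂ} (hs : 1 < s.re) :
    HasSum (fun n : ℕ => ((n : ℂ) + 1) ^ (-s)) (riemannZeta s) := by
  have hsum : Summable (fun n : ℕ => 1 / ((n : ℂ) + 1) ^ s) := by
    exact_mod_cast (summable_nat_add_iff 1).mpr (Complex.summable_one_div_nat_cpow.mpr hs)
  rw [zeta_eq_tsum_one_div_nat_add_one_cpow hs]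
  convert hsum.hasSum using 2 with n
  rw [cpow_neg, one_div]

theorem hasSum_neg_one_pow_mul_pow_succ {K : Type*} [NormedField K] [CompleteSpace K] {x : K}
    (hx : ‖x‖ < 1) : HasSum (fun k : ℕ => (-1) ^ k * x ^ (k + 1)) (x / (1 + x)) := by
  have := (hasSum_geometric_of_norm_lt_one ((norm_neg x).symm ▸ hx)).mul_left x
  rw [sub_neg_eq_add, ← div_eq_mul_inv] at this
  exact this.congr_fun fun k => by ring

def zetaExpansionTerm (s z : ℂ) (m : ℕ) (p : ℕ × ℕ) : ℂ :=
  (-1) ^ p.1 * z ^ (p.1 + 1) * ((p.2 : ℂ) + 1) ^ (-(s + (m : ℂ) * ((p.1 : ℂ) + 1)))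

section zetaExpansionTerm

variable {s z : ℂ} {m : ℕ}

theorem re_add_natCast_le_re_add_natCast_mul_succ (s : ℂ) (m k : ℕ) :
    s.re + m ≤ (s + (m : ℂ) * ((k : ℂ) + 1)).re := by
  have : (m : ℝ) ≤ m * ((k : ℝ) + 1) := le_mul_of_one_le_right m.cast_nonneg (by simp)
  simpa using this

theorem norm_zetaExpansionTerm_le (p : ℕ × ℕ) :
    ‖zetaExpansionTerm s z m p‖ ≤ ‖z‖ ^ (p.1 + 1) * ((p.2 : ℝ) + 1) ^ (-(s.re + m)) := by
  obtain ⟨k, n⟩ := p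
  have hcast : ((n : ℂ) + 1) = ((n + 1 : ℕ) : ℂ) := by push_cast; rfl
  rw [zetaExpansionTerm, norm_mul, norm_mul, norm_pow, norm_pow, norm_neg, norm_one, one_pow,
    one_mul, hcast, norm_natCast_cpow_of_pos n.succ_pos, neg_re]
  push_cast
  gcongr
  · exact le_add_of_nonneg_left n.cast_nonneg
  · exact re_add_natCast_le_re_add_natCast_mul_succ s m k

theorem summable_zetaExpansionTerm (hz : ‖z‖ < 1) (hs : 1 < s.re + m) :
    Summable (zetaExpansionTerm s z m) := by
  have hgeom : Summable (fun k : ℕ => ‖z‖ ^ (k + 1)) :=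
    (summable_nat_add_iff 1).mpr (summable_geometric_of_lt_one (norm_nonneg z) hz)
  have hpow : Summable (fun n : ℕ => ((n : ℝ) + 1) ^ (-(s.re + m))) := by
    exact_mod_cast (summable_nat_add_iff 1).mpr (Real.summable_nat_rpow.mpr (by linarith))
  have hprod : Summable (fun p : ℕ × ℕ => ‖z‖ ^ (p.1 + 1) * ((p.2 : ℝ) + 1) ^ (-(s.re + m))) :=
    hgeom.mul_of_nonneg hpow (fun _ => by positivity) (fun _ => by positivity)
  exact hprod.of_norm_bounded norm_zetaExpansionTerm_le

theorem hasSum_zetaExpansionTerm_fixed_fst (hs : 1 < s.re + m) (k : ℕ) :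
    HasSum (fun n => zetaExpansionTerm s z m (k, n))
      ((-1) ^ k * z ^ (k + 1) * riemannZeta (s + (m : ℂ) * ((k : ℂ) + 1))) := by
  have hre := hs.trans_le (re_add_natCast_le_re_add_natCast_mul_succ s m k)
  exact (hasSum_nat_add_one_cpow_neg hre).mul_left ((-1) ^ k * z ^ (k + 1))

theorem hasSum_zetaExpansionTerm_fixed_snd (hz : ‖z‖ < 1) (n : ℕ) :
    HasSum (fun k => zetaExpansionTerm s z m (k, n))
      (((n : ℂ) + 1) ^ (-s) * (z / (((n : ℂ) + 1) ^ m + z))) := by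
  have hb : (n : ℂ) + 1 ≠ 0 := by exact_mod_cast n.succ_ne_zero
  have hbm : 1 ≤ ‖((n : ℂ) + 1) ^ m‖ := by
    rw [norm_pow, show ‖(n : ℂ) + 1‖ = n + 1 by exact_mod_cast Complex.norm_natCast (n + 1)]
    exact one_le_pow₀ (le_add_of_nonneg_left n.cast_nonneg)
  set b : ℂ := (n : ℂ) + 1
  have hx : ‖z / b ^ m‖ < 1 := by
    rw [norm_div, div_lt_one (one_pos.trans_le hbm)]
    exact hz.trans_le hbm
  have hbmz : b ^ m + z ≠ 0 := by
    intro h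
    rw [← neg_eq_of_add_eq_zero_right h, norm_neg] at hz
    exact hz.not_ge hbm
  have hsum := (hasSum_neg_one_pow_mul_pow_succ hx).mul_left (b ^ (-s))
  have hvalue : z / b ^ m / (1 + z / b ^ m) = z / (b ^ m + z) := by
    field_simp
  rw [hvalue] at hsum
  refine hsum.congr_fun fun k => ?_
  have hexp : b ^ (-(s + (m : ℂ) * ((k : ℂ) + 1))) = b ^ (-s) * ((b ^ m) ^ (k + 1))⁻¹ := by
    rw [neg_add, cpow_add _ _ hb, cpow_neg b (_ * _), ← pow_mul]
    norm_cast
  rw [zetaExpansionTerm, hexp, div_pow]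
  ring

theorem tsum_cpow_neg_mul_div_pow_add_eq_tsum_riemannZeta (hz : ‖z‖ < 1) (hs : 1 < s.re + m) :
    Summable (fun n : ℕ => ((n : ℂ) + 1) ^ (-s) * (z / (((n : ℂ) + 1) ^ m + z))) ∧
    Summable (fun k : ℕ =>
      (-1) ^ k * z ^ (k + 1) * riemannZeta (s + (m : ℂ) * ((k : ℂ) + 1))) ∧
    ∑' n : ℕ, ((n : ℂ) + 1) ^ (-s) * (z / (((n : ℂ) + 1) ^ m + z)) =
      ∑' k : ℕ, (-1) ^ k * z ^ (k + 1) * riemannZeta (s + (m : ℂ) * ((k : ℂ) + 1)) := by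
  have hF := (summable_zetaExpansionTerm hz hs).hasSum
  have hk := hF.prod_fiberwise (hasSum_zetaExpansionTerm_fixed_fst hs)
  have hn := ((Equiv.prodComm ℕ ℕ).hasSum_iff.mpr hF).prod_fiberwise
    (hasSum_zetaExpansionTerm_fixed_snd hz)
  exact ⟨hn.summable, hk.summable, hn.tsum_eq.trans hk.tsum_eq.symm⟩

end zetaExpansionTerm

theorem stmt_16 (t : ℂ) (habs : ‖t‖ < 2 * π) (him : t.im < 3/2) :
    Summable (fun n : ℕ =>
      Complex.exp ((-(1/2 : ℂ) - Complex.I * t) * Real.log (n + 1)) *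
        (t / (2 * π * ((n : ℂ) + 1) ^ 2 + t))) ∧
    Summable (fun k : ℕ =>
      (-1 : ℂ) ^ k * (t / (2 * π)) ^ (k + 1) *
        riemannZeta (2 * (k + 1) + 1/2 + Complex.I * t)) ∧
    (∑' n : ℕ, Complex.exp ((-(1/2 : ℂ) - Complex.I * t) * Real.log (n + 1)) *
        (t / (2 * π * ((n : ℂ) + 1) ^ 2 + t))) =
      ∑' k : ℕ, (-1 : ℂ) ^ k * (t / (2 * π)) ^ (k + 1) *
        riemannZeta (2 * (k + 1) + 1/2 + Complex.I * t) := by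
  have hz : ‖t / (2 * π)‖ < 1 := by
    rw [norm_div, norm_mul, Complex.norm_ofNat, Complex.norm_real, Real.norm_of_nonneg pi_pos.le,
      div_lt_one (by positivity)]
    exact habs
  have hs : 1 < (1 / 2 + I * t).re + (2 : ℕ) := by
    simp only [add_re, mul_re, I_re, I_im]
    norm_num
    linarith
  obtain ⟨hL, hR, heq⟩ := tsum_cpow_neg_mul_div_pow_add_eq_tsum_riemannZeta hz hs
  have hterm_n (n : ℕ) : ((n : ℂ) + 1) ^ (-(1 / 2 + I * t)) *
      (t / (2 * π) / (((n : ℂ) + 1) ^ 2 + t / (2 * π))) =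
      Complex.exp ((-(1/2 : ℂ) - Complex.I * t) * Real.log (n + 1)) *
        (t / (2 * π * ((n : ℂ) + 1) ^ 2 + t)) := by
    rw [Complex.exp_mul_ofReal_log (by positivity)]
    push_cast
    congr 1
    · ring_nf
    · field_simp
  have hterm_k (k : ℕ) : (-1) ^ k * (t / (2 * π)) ^ (k + 1) *
      riemannZeta (1 / 2 + I * t + ((2 : ℕ) : ℂ) * ((k : ℂ) + 1)) =
      (-1 : ℂ) ^ k * (t / (2 * π)) ^ (k + 1) *
        riemannZeta (2 * (k + 1) + 1/2 + Complex.I * t) := by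
    congr 2
    push_cast
    ring
  exact ⟨hL.congr hterm_n, hR.congr hterm_k,
    (tsum_congr hterm_n).symm.trans (heq.trans (tsum_congr hterm_k))⟩
end
end
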